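/- Let a, b be positive integers, let (U_n) be a non-degenerate linear recurrence sequence of integers of order k ≥ 2 whose first coefficient f₁ is a nonzero constant η₁ and which has dominant root α₁, let ε > 0 and r ≥ 1, and order the roots so that |α₂| = max_{2≤j≤t}|α_j|. Then there exists an (effectively computable) constant c, depending only on ε, γ, k, r, a, b, such that for every (n, m, z₁,…,z_r) with n ≥ m ≥ 1, z₁,…,z_r ∈ 𝒰_S, aU_n + bU_m = z₁ + ⋯ + z_r, |z_i|^{1+ε} ≤ |z_r| for 1 ≤ i ≤ r−1, f_j(n) ≠ 0 and f_j(m) ≠ 0 for 2 ≤ j ≤ t, and |aU_n + bU_m| > (1/2)|η₁|α₁ⁿ, one has |η₁·α₁ⁿ·(a + b·α₁^{m−n})·z_r^{−1} − 1| ≤ c·n^{k−1}·N^{n}, where N = max(α₁^{−ε/(1+ε)}, |α₂|/α₁). -/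

import Mathlib

open scoped BigOperators

/-- `z` is an `S`-unit for the finite set of primes `p 0, …, p (L-1)`:
`z = ± p₁^{e₁} ⋯ p_L^{e_L}` with nonnegative integer exponents. -/
def IsSUnit {L : ℕ} (p : Fin L → ℕ) (z : ℤ) : Prop :=
  ∃ (e : Fin L → ℕ) (s : ℤ), (s = 1 ∨ s = -1) ∧ z = s * ∏ i, (p i : ℤ) ^ e i

/-!
Write `aUₙ + bUₘ = η Aⁿ (a + b A^{m-n}) + R`, where `R` collects the non-dominant terms
`fⱼ(n) αⱼⁿ`, `fⱼ(m) αⱼᵐ`, so `|R| ≪ n^{k-1} max(1, |α₂|)ⁿ` because `deg fⱼ < mⱼ ≤ k`.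
Also `aUₙ + bUₘ = z_r + S` with `|S| ≤ r |z_r|^{1/(1+ε)}`, so the quantity to bound is
`(S - R) / z_r`. Since the `zᵢ` are integers, `|zᵢ| ≤ |zᵢ|^{1+ε} ≤ |z_r|`, hence
`|z_r| ≥ |aUₙ + bUₘ| / r ≫ Aⁿ`. This gives `|S / z_r| ≤ r |z_r|^{-ε/(1+ε)} ≪ A^{-nε/(1+ε)}` and
`|R / z_r| ≪ n^{k-1} (max(1, |α₂|) / A)ⁿ`, and `1 / A ≤ A^{-ε/(1+ε)}`.
-/

open Polynomial Finset

namespace Polynomial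

lemma norm_eval_le_sum_norm_coeff_mul_pow {𝕜 : Type*} [NormedField 𝕜] {P : 𝕜[X]} {d : ℕ}
    (hd : P.natDegree ≤ d) {x : 𝕜} (hx : 1 ≤ ‖x‖) :
    ‖P.eval x‖ ≤ (∑ i ∈ range (d + 1), ‖P.coeff i‖) * ‖x‖ ^ d := by
  rw [eval_eq_sum_range' (Nat.lt_succ_of_le hd), sum_mul]
  refine (norm_sum_le _ _).trans (sum_le_sum fun i hi => ?_)
  rw [norm_mul, norm_pow]
  gcongr
  exact Nat.lt_succ_iff.mp (mem_range.mp hi)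

lemma natDegree_X_pow_sub_sum_C_mul_X_pow_le {R : Type*} [CommRing R] (k : ℕ) (c : Fin k → R) :
    (X ^ k - ∑ i : Fin k, C (c i) * X ^ (k - 1 - (i : ℕ))).natDegree ≤ k :=
  (natDegree_sub_le _ _).trans <| max_le (natDegree_X_pow_le k) <|
    natDegree_sum_le_of_forall_le _ _ fun _ _ => (natDegree_C_mul_X_pow_le _ _).trans (by omega)

lemma le_natDegree_prod_X_sub_C_pow {R ι : Type*} [CommRing R] [Nontrivial R] [Fintype ι]
    (α : ι → R) (mult : ι → ℕ) (j : ι) :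
    mult j ≤ (∏ i, (X - C (α i)) ^ mult i).natDegree := by
  rw [natDegree_prod_of_monic _ _ fun i _ => (monic_X_sub_C _).pow _]
  simp only [(monic_X_sub_C _).natDegree_pow, natDegree_X_sub_C, mul_one]
  exact single_le_sum (fun i _ => Nat.zero_le _) (mem_univ j)

lemma le_of_X_pow_sub_sum_eq_prod {R ι : Type*} [CommRing R] [Nontrivial R] [Fintype ι] {k : ℕ}
    {c : Fin k → R} {α : ι → R} {mult : ι → ℕ}
    (h : X ^ k - ∑ i : Fin k, C (c i) * X ^ (k - 1 - (i : ℕ)) = ∏ i, (X - C (α i)) ^ mult i)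
    (j : ι) : mult j ≤ k :=
  (le_natDegree_prod_X_sub_C_pow α mult j).trans (h ▸ natDegree_X_pow_sub_sum_C_mul_X_pow_le k c)

end Polynomial

lemma norm_sum_eval_mul_pow_le {𝕜 ι : Type*} [RCLike 𝕜] (s : Finset ι) (g : ι → 𝕜[X])
    (β : ι → 𝕜) {d : ℕ} (hg : ∀ j ∈ s, (g j).natDegree ≤ d) {B : ℝ}
    (hβ : ∀ j ∈ s, ‖β j‖ ≤ B) {m n : ℕ} (hm : 1 ≤ m) (hmn : m ≤ n) :
    ‖∑ j ∈ s, (g j).eval (m : 𝕜) * β j ^ m‖ ≤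
      (∑ j ∈ s, ∑ i ∈ range (d + 1), ‖(g j).coeff i‖) * (n : ℝ) ^ d * max 1 B ^ n := by
  rw [sum_mul, sum_mul]
  refine (norm_sum_le _ _).trans (sum_le_sum fun j hj => ?_)
  have hm' : (1 : ℝ) ≤ ‖(m : 𝕜)‖ := by rw [RCLike.norm_natCast]; exact_mod_cast hm
  have heval := norm_eval_le_sum_norm_coeff_mul_pow (hg j hj) hm'
  rw [RCLike.norm_natCast] at heval
  rw [norm_mul, norm_pow]
  gcongr
  · exact heval.trans (by gcongr)
  · calc ‖β j‖ ^ m ≤ max 1 B ^ m := by gcongr; exact le_max_of_le_right (hβ j hj)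
      _ ≤ max 1 B ^ n := pow_le_pow_right₀ (le_max_left _ _) hmn

lemma exists_norm_sub_dominant_le {𝕜 ι : Type*} [RCLike 𝕜] [Fintype ι] [DecidableEq ι]
    {u : ℕ → 𝕜} {g : ι → 𝕜[X]} {β : ι → 𝕜} {i₀ : ι} {η : 𝕜} {d : ℕ} {B : ℝ}
    (hu : ∀ N, u N = ∑ i, (g i).eval (N : 𝕜) * β i ^ N) (hg₀ : g i₀ = C η)
    (hg : ∀ i, (g i).natDegree ≤ d) (hβ : ∀ i ≠ i₀, ‖β i‖ ≤ B) :
    ∃ K, 0 ≤ K ∧ ∀ {N n : ℕ}, 1 ≤ N → N ≤ n →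
      ‖u N - η * β i₀ ^ N‖ ≤ K * (n : ℝ) ^ d * max 1 B ^ n := by
  refine ⟨∑ j ∈ univ.erase i₀, ∑ i ∈ range (d + 1), ‖(g j).coeff i‖, by positivity,
    fun hN hNn => ?_⟩
  rw [hu, ← add_sum_erase _ _ (mem_univ i₀), hg₀, eval_C, add_sub_cancel_left]
  exact norm_sum_eval_mul_pow_le _ g β (fun j _ => hg j) (fun j hj => hβ j (ne_of_mem_erase hj))
    hN hNn

lemma norm_natCast_mul_add_natCast_mul_le {𝕜 : Type*} [RCLike 𝕜] (a b : ℕ) {x y : 𝕜} {K : ℝ}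
    (hx : ‖x‖ ≤ K) (hy : ‖y‖ ≤ K) : ‖(a : 𝕜) * x + b * y‖ ≤ (a + b) * K := by
  calc ‖(a : 𝕜) * x + b * y‖ ≤ a * ‖x‖ + b * ‖y‖ := by
        refine (norm_add_le _ _).trans ?_
        rw [norm_mul, norm_mul, RCLike.norm_natCast, RCLike.norm_natCast]
    _ ≤ a * K + b * K := by gcongr
    _ = (a + b) * K := by ring

lemma abs_intCast_le_rpow (z : ℤ) {p : ℝ} (hp : 1 ≤ p) : |(z : ℝ)| ≤ |(z : ℝ)| ^ p := by
  rcases eq_or_ne z 0 with rfl | hz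
  · simp [Real.zero_rpow (by linarith : p ≠ 0)]
  · exact Real.self_le_rpow_of_one_le (by exact_mod_cast Int.one_le_abs hz) hp

section DominantSummand

variable {ι : Type*} [Fintype ι] {i₀ : ι} {ε : ℝ}

lemma abs_sum_intCast_le_card_mul {z : ι → ℤ} (hε : 0 ≤ ε)
    (h : ∀ i ≠ i₀, |(z i : ℝ)| ^ (1 + ε) ≤ |(z i₀ : ℝ)|) :
    |∑ i, (z i : ℝ)| ≤ Fintype.card ι * |(z i₀ : ℝ)| := by
  have hle : ∀ i, |(z i : ℝ)| ≤ |(z i₀ : ℝ)| := fun i => by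
    rcases eq_or_ne i i₀ with rfl | hi
    · rfl
    · exact (abs_intCast_le_rpow _ (by linarith)).trans (h i hi)
  calc |∑ i, (z i : ℝ)| ≤ ∑ i, |(z i : ℝ)| := abs_sum_le_sum_abs _ _
    _ ≤ ∑ _i : ι, |(z i₀ : ℝ)| := sum_le_sum fun i _ => hle i
    _ = Fintype.card ι * |(z i₀ : ℝ)| := by rw [sum_const, nsmul_eq_mul, card_univ]

lemma abs_sum_erase_le_card_mul_rpow [DecidableEq ι] {x : ι → ℝ} (hε : 0 < 1 + ε)
    (h : ∀ i ≠ i₀, |x i| ^ (1 + ε) ≤ |x i₀|) :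
    |∑ i ∈ univ.erase i₀, x i| ≤ Fintype.card ι * |x i₀| ^ (1 + ε)⁻¹ := by
  calc |∑ i ∈ univ.erase i₀, x i| ≤ ∑ i ∈ univ.erase i₀, |x i| := abs_sum_le_sum_abs _ _
    _ ≤ ∑ _i ∈ univ.erase i₀, |x i₀| ^ (1 + ε)⁻¹ := sum_le_sum fun i hi =>
        (Real.le_rpow_inv_iff_of_pos (abs_nonneg _) (abs_nonneg _) hε).2 (h i (ne_of_mem_erase hi))
    _ ≤ Fintype.card ι * |x i₀| ^ (1 + ε)⁻¹ := by
        rw [sum_const, nsmul_eq_mul]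
        gcongr
        exact_mod_cast card_erase_le

end DominantSummand

section Estimates

variable {A ε w : ℝ} {n : ℕ}

lemma rpow_neg_le_of_mul_pow_le {δ x : ℝ} (hw : 0 < w) (hA : 0 < A) (hδ : 0 ≤ δ)
    (hx : w * A ^ n ≤ x) : x ^ (-δ) ≤ w ^ (-δ) * (A ^ (-δ)) ^ n := by
  calc x ^ (-δ) ≤ (w * A ^ n) ^ (-δ) := Real.rpow_le_rpow_of_nonpos (by positivity) hx (by linarith)
    _ = w ^ (-δ) * (A ^ (-δ)) ^ n := by
      rw [Real.mul_rpow hw.le (by positivity), Real.rpow_pow_comm hA.le]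

lemma max_one_div_le_max_rpow_neg {B δ : ℝ} (hA : 1 < A) (hδ : δ ≤ 1) :
    max 1 B / A ≤ max (A ^ (-δ)) (B / A) := by
  rw [← max_div_div_right (by linarith)]
  refine max_le_max_right _ ?_
  rw [one_div, ← Real.rpow_neg_one]
  exact Real.rpow_le_rpow_of_exponent_le hA.le (by linarith)

lemma norm_div_le_of_le_rpow {S Z : ℂ} {r : ℝ} (hε : 0 < ε) (hw : 0 < w) (hA : 0 < A)
    (hZ : w * A ^ n ≤ ‖Z‖) (hS : ‖S‖ ≤ r * ‖Z‖ ^ (1 + ε)⁻¹) (hr : 0 ≤ r) :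
    ‖S‖ / ‖Z‖ ≤ r * w ^ (-(ε / (1 + ε))) * (A ^ (-(ε / (1 + ε)))) ^ n := by
  have hZ0 : 0 < ‖Z‖ := (by positivity : 0 < w * A ^ n).trans_le hZ
  have hexp : (1 + ε)⁻¹ - 1 = -(ε / (1 + ε)) := by field_simp; ring
  calc ‖S‖ / ‖Z‖ ≤ r * (‖Z‖ ^ (1 + ε)⁻¹ / ‖Z‖) := by
        rw [mul_div_assoc']; gcongr
    _ = r * ‖Z‖ ^ (-(ε / (1 + ε))) := by rw [← Real.rpow_sub_one hZ0.ne', hexp]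
    _ ≤ r * (w ^ (-(ε / (1 + ε))) * (A ^ (-(ε / (1 + ε)))) ^ n) := by
        gcongr; exact rpow_neg_le_of_mul_pow_le hw hA (by positivity) hZ
    _ = r * w ^ (-(ε / (1 + ε))) * (A ^ (-(ε / (1 + ε)))) ^ n := by ring

lemma norm_div_le_of_le_mul_pow {R Z : ℂ} {M K : ℝ} {d : ℕ} (hw : 0 < w) (hA : 0 < A)
    (hZ : w * A ^ n ≤ ‖Z‖) (hR : ‖R‖ ≤ K * (n : ℝ) ^ d * M ^ n) :
    ‖R‖ / ‖Z‖ ≤ K / w * (n : ℝ) ^ d * (M / A) ^ n := by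
  calc ‖R‖ / ‖Z‖ ≤ ‖R‖ / (w * A ^ n) := by gcongr
    _ ≤ K * (n : ℝ) ^ d * M ^ n / (w * A ^ n) := by gcongr
    _ = K / w * (n : ℝ) ^ d * (M / A) ^ n := by rw [div_pow]; field_simp

lemma norm_mul_inv_sub_one_le {X Z S R : ℂ} {B K : ℝ} {r d : ℕ} (hX : X = Z + S - R)
    (hε : 0 < ε) (hw : 0 < w) (hA : 1 < A) (hK : 0 ≤ K) (hn : 1 ≤ n)
    (hZ : w * A ^ n ≤ ‖Z‖) (hS : ‖S‖ ≤ r * ‖Z‖ ^ (1 + ε)⁻¹)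
    (hR : ‖R‖ ≤ K * (n : ℝ) ^ d * max 1 B ^ n) :
    ‖X * Z⁻¹ - 1‖ ≤ (r * w ^ (-(ε / (1 + ε))) + K / w) * (n : ℝ) ^ d *
      max (A ^ (-(ε / (1 + ε)))) (B / A) ^ n := by
  set δ := ε / (1 + ε)
  set N := max (A ^ (-δ)) (B / A)
  have hA0 : 0 < A := by linarith
  have hZ0 : 0 < ‖Z‖ := (by positivity : 0 < w * A ^ n).trans_le hZ
  have hδ1 : δ ≤ 1 := (div_le_one (by linarith)).2 (by linarith)
  have hAδ : 0 ≤ A ^ (-δ) := by positivity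
  have hnd : (1 : ℝ) ≤ (n : ℝ) ^ d := one_le_pow₀ (by exact_mod_cast hn)
  have hsplit : X * Z⁻¹ - 1 = (S - R) * Z⁻¹ := by
    have hZne : Z ≠ 0 := norm_pos_iff.1 hZ0
    rw [hX]; field_simp; ring
  have hSZ : ‖S‖ / ‖Z‖ ≤ r * w ^ (-δ) * (n : ℝ) ^ d * N ^ n := by
    refine (norm_div_le_of_le_rpow hε hw hA0 hZ hS (by positivity)).trans ?_
    rw [mul_assoc _ ((n : ℝ) ^ d)]
    gcongr
    exact (pow_le_pow_left₀ hAδ (le_max_left _ _) n).trans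
      (le_mul_of_one_le_left (by positivity) hnd)
  have hRZ : ‖R‖ / ‖Z‖ ≤ K / w * (n : ℝ) ^ d * N ^ n := by
    refine (norm_div_le_of_le_mul_pow hw hA0 hZ hR).trans ?_
    gcongr
    exact max_one_div_le_max_rpow_neg hA hδ1
  calc ‖X * Z⁻¹ - 1‖ = ‖S - R‖ / ‖Z‖ := by rw [hsplit, norm_mul, norm_inv, div_eq_mul_inv]
    _ ≤ ‖S‖ / ‖Z‖ + ‖R‖ / ‖Z‖ := by rw [← add_div]; gcongr; exact norm_sub_le _ _
    _ ≤ _ := by linarith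

end Estimates

theorem Phi2_upper_bound
    (k t : ℕ) (ht : 0 < t)
    (c : Fin k → ℤ)
    (U : ℕ → ℤ)
    (α : Fin t → ℂ)
    (mult : Fin t → ℕ)
    (hchar : (Polynomial.X ^ k -
        ∑ i : Fin k, Polynomial.C ((c i : ℂ)) * Polynomial.X ^ (k - 1 - (i : ℕ)))
      = ∏ i : Fin t, (Polynomial.X - Polynomial.C (α i)) ^ (mult i))
    (f : Fin t → Polynomial ℂ)
    (hfdeg : ∀ i, (f i).natDegree < mult i)
    (hrep : ∀ n : ℕ, (U n : ℂ) = ∑ i : Fin t, (f i).eval (n : ℂ) * α i ^ n)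
    (A : ℝ) (hA : (A : ℂ) = α ⟨0, ht⟩) (hA1 : 1 < A)
    (η : ℂ) (hη : η ≠ 0) (hf1 : f ⟨0, ht⟩ = Polynomial.C η)
    (ht2 : 2 ≤ t)
    (hmax2 : ∀ j : Fin t, j ≠ ⟨0, ht⟩ → ‖α j‖ ≤ ‖α ⟨1, by omega⟩‖)
    (L : ℕ) (p : Fin L → ℕ)
    (a b : ℕ)
    (ε : ℝ) (hε : 0 < ε) (r : ℕ) (hr : 1 ≤ r) :
    ∃ C : ℝ, ∀ (n m : ℕ) (z : Fin r → ℤ),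
      1 ≤ m → m ≤ n →
      (∀ i, IsSUnit p (z i)) →
      ((a : ℤ) * U n + (b : ℤ) * U m = ∑ i, z i) →
      (∀ i : Fin r, (i : ℕ) < r - 1 →
        ((|z i| : ℝ)) ^ (1 + ε) ≤ ((|z ⟨r - 1, by omega⟩| : ℝ))) →
      (∀ j : Fin t, j ≠ ⟨0, ht⟩ → (f j).eval (n : ℂ) ≠ 0) →
      (∀ j : Fin t, j ≠ ⟨0, ht⟩ → (f j).eval (m : ℂ) ≠ 0) →
      ((|(a : ℤ) * U n + (b : ℤ) * U m| : ℝ)) > (1 / 2) * ‖η‖ * A ^ n →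
      ‖η * (A : ℂ) ^ n * ((a : ℂ) + (b : ℂ) * (A : ℂ) ^ ((m : ℤ) - (n : ℤ)))
          * ((z ⟨r - 1, by omega⟩ : ℤ) : ℂ)⁻¹ - 1‖
        ≤ C * (n : ℝ) ^ (k - 1) *
          (max (A ^ (-(ε / (1 + ε)))) (‖α ⟨1, by omega⟩‖ / A)) ^ n := by
  obtain ⟨K, hK, hU⟩ := exists_norm_sub_dominant_le (u := fun N => (U N : ℂ)) (d := k - 1)
    hrep hf1 (fun j => by have := le_of_X_pow_sub_sum_eq_prod hchar j; have := hfdeg j; omega)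
    hmax2
  rw [← hA] at hU
  set w := ‖η‖ / (2 * r)
  refine ⟨r * w ^ (-(ε / (1 + ε))) + (a + b) * K / w, ?_⟩
  intro n m z hm hmn _ hsum hsmall _ _ hbig
  set iₗ : Fin r := ⟨r - 1, by omega⟩
  have hsmall' : ∀ i ≠ iₗ, |(z i : ℝ)| ^ (1 + ε) ≤ |(z iₗ : ℝ)| := fun i hi =>
    hsmall i (by have := i.isLt; have : (i : ℕ) ≠ r - 1 := fun h => hi (Fin.ext h); omega)
  refine norm_mul_inv_sub_one_le (S := ∑ i ∈ univ.erase iₗ, (z i : ℂ))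
    (R := a * (U n - η * A ^ n) + b * (U m - η * A ^ m)) ?_ hε (by positivity) hA1
    (by positivity) (hm.trans hmn) ?_ ?_ ((norm_natCast_mul_add_natCast_mul_le a b
      (hU (hm.trans hmn) le_rfl) (hU hm hmn)).trans_eq (by ring))
  · have hAm : (A : ℂ) ^ n * (A : ℂ) ^ ((m : ℤ) - n) = A ^ m := by
      rw [← zpow_natCast, ← zpow_natCast, ← zpow_add₀ (Complex.ofReal_ne_zero.2 (by linarith))]
      congr 1; ring
    have hsumC : (a : ℂ) * U n + b * U m = z iₗ + ∑ i ∈ univ.erase iₗ, (z i : ℂ) := by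
      rw [add_sum_erase _ (fun i => (z i : ℂ)) (mem_univ iₗ)]; exact_mod_cast hsum
    linear_combination b * η * hAm + hsumC
  · have hsumR : ((a : ℤ) : ℝ) * U n + ((b : ℤ) : ℝ) * U m = ∑ i, (z i : ℝ) := by
      exact_mod_cast hsum
    have hlast := abs_sum_intCast_le_card_mul hε.le hsmall'
    rw [← hsumR, Fintype.card_fin] at hlast
    rw [Complex.norm_intCast, div_mul_eq_mul_div, div_le_iff₀ (by positivity)]
    linarith
  · have h := abs_sum_erase_le_card_mul_rpow (x := fun i => (z i : ℝ)) (by linarith) hsmall'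
    rw [Fintype.card_fin] at h
    rwa [Complex.norm_intCast, ← Int.cast_sum, Complex.norm_intCast, Int.cast_sum]
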